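/- Let x ∈ [0,1]^n be feasible for the strengthened LP of a k-column-sparse packing instance, let α > 0 with αk ≥ 2, and let S include each item i independently with probability x_i/(αk). Let Alt'(T) = { i ∈ T : for every j ∈ N(i), Σ_{i' ∈ T : s_{i'j} ≥ s_{ij}} s_{i'j} ≤ 1 }. Then for every item i ∈ [n]: Pr[i ∈ Alt'(S) | i ∈ S] ≥ ( 1 − (1/(αk)) · (1 + (2/(αk))^{1/3}) )^k. -/

import Mathlib

/-!
Conditioning on `i ∈ S` raises the marginal of `i` to `1` and leaves the other items
independent. Item `i` survives constraint `j` on a decreasing event, so by Harris' inequality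
the survival probability is at least the product, over the at most `k` constraints of `N(i)`,
of the probabilities of surviving each one. With `C = 1/(αk)`, `t = (2C)^{1/3}` and
`a = s_{ij}`, constraint `j` removes `i` with probability at most `C(1+t)`:
* if `a > 1/2`, some other big item must be present, and by the strengthened LP the big
  items have total probability at most `C`;
* if `t/(1+t) < a ≤ 1/2`, a big item or two distinct items of size in `[a, 1/2]` must be
  present; the latter have total probability at most `C/a`, so a second-moment bound gives
  `C + (C/a)²/2 ≤ C(1+t)`;
* if `a ≤ t/(1+t)`, Markov's inequality for the load of the other items of size at least `a`
  gives `C/(1-a) ≤ C(1+t)`.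
-/

open Finset
open scoped Classical BigOperators

/-- Probability of the subset `T` under the product distribution on subsets of
`Fin n` with marginal probabilities `q`. -/
noncomputable def prodP {n : ℕ} (q : Fin n → ℝ) (T : Finset (Fin n)) : ℝ :=
  (∏ i ∈ T, q i) * ∏ i ∈ Tᶜ, (1 - q i)

/-- Probability of an event under the product distribution with marginals `q`. -/
noncomputable def prE {n : ℕ} (q : Fin n → ℝ) (E : Finset (Fin n) → Prop) : ℝ :=
  ∑ T : Finset (Fin n), if E T then prodP q T else 0

/-- The alteration map of the improved algorithm: keep `i ∈ T` iff for every
constraint `j` in which `i` participates, the total size of the items of `T`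
that are at least as large as `i` in constraint `j` is at most `1`. -/
noncomputable def altSet' {n m : ℕ} (s : Fin n → Fin m → ℝ) (T : Finset (Fin n)) :
    Finset (Fin n) :=
  T.filter (fun i => ∀ j, 0 < s i j →
    (∑ i' ∈ T.filter (fun i'' => s i j ≤ s i'' j), s i' j) ≤ 1)

section ProductMeasure

variable {n : ℕ} {q : Fin n → ℝ}

noncomputable def expectation (q : Fin n → ℝ) (f : Finset (Fin n) → ℝ) : ℝ :=
  ∑ T, prodP q T * f T

lemma sum_prodP (q : Fin n → ℝ) : ∑ T, prodP q T = 1 := by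
  have h := prod_add q (fun i => 1 - q i) univ
  simp only [add_sub_cancel, prod_const_one, powerset_univ, ← compl_eq_univ_sdiff] at h
  exact h.symm

lemma prodP_nonneg (hq : ∀ i, q i ∈ Set.Icc (0 : ℝ) 1) (T : Finset (Fin n)) :
    0 ≤ prodP q T :=
  mul_nonneg (prod_nonneg fun i _ => (hq i).1) (prod_nonneg fun i _ => sub_nonneg.2 (hq i).2)

lemma prE_true (q : Fin n → ℝ) : prE q (fun _ => True) = 1 := by
  simp [prE, sum_prodP]

lemma prE_nonneg (hq : ∀ i, q i ∈ Set.Icc (0 : ℝ) 1) (E : Finset (Fin n) → Prop) :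
    0 ≤ prE q E :=
  sum_nonneg fun T _ => by split_ifs <;> simp [prodP_nonneg hq T]

lemma prE_mono (hq : ∀ i, q i ∈ Set.Icc (0 : ℝ) 1) {E F : Finset (Fin n) → Prop}
    (h : ∀ T, E T → F T) : prE q E ≤ prE q F :=
  sum_le_sum fun T _ => by
    split_ifs with hE hF
    exacts [le_rfl, absurd (h T hE) hF, prodP_nonneg hq T, le_rfl]

lemma prE_not (q : Fin n → ℝ) (E : Finset (Fin n) → Prop) :
    prE q (fun T => ¬ E T) = 1 - prE q E := by
  rw [eq_sub_iff_add_eq, prE, prE, ← sum_add_distrib, ← sum_prodP q]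
  exact sum_congr rfl fun T _ => by by_cases hE : E T <;> simp [hE]

lemma prE_le_add (hq : ∀ i, q i ∈ Set.Icc (0 : ℝ) 1) {E F G : Finset (Fin n) → Prop}
    (h : ∀ T, E T → F T ∨ G T) : prE q E ≤ prE q F + prE q G := by
  rw [prE, prE, prE, ← sum_add_distrib]
  refine sum_le_sum fun T _ => ?_
  have := prodP_nonneg hq T
  by_cases hE : E T
  · rcases h T hE with hF | hG <;> split_ifs <;> linarith
  · split_ifs <;> linarith

/-- Conditioning on `i ∈ T` amounts to raising the marginal of `i` to `1`. -/
lemma ite_mem_prodP (q : Fin n → ℝ) (i : Fin n) (T : Finset (Fin n)) :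
    (if i ∈ T then prodP q T else 0) = q i * prodP (Function.update q i 1) T := by
  by_cases hi : i ∈ T
  · have hic : i ∉ Tᶜ := notMem_compl.2 hi
    simp only [hi, if_true, prodP, prod_update_of_mem hi, one_mul]
    rw [← mul_prod_erase T q hi, mul_assoc, ← sdiff_singleton_eq_erase]
    congr 2
    exact prod_congr rfl fun b hb => by rw [Function.update_of_ne (ne_of_mem_of_not_mem hb hic)]
  · rw [if_neg hi, prodP, prod_eq_zero (mem_compl.2 hi) (by simp), mul_zero, mul_zero]

lemma update_mem_Icc (hq : ∀ b, q b ∈ Set.Icc (0 : ℝ) 1) {i : Fin n} {p : ℝ}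
    (hp : p ∈ Set.Icc (0 : ℝ) 1) (b : Fin n) : Function.update q i p b ∈ Set.Icc (0 : ℝ) 1 := by
  rcases eq_or_ne b i with rfl | hb
  exacts [by rwa [Function.update_self], by rw [Function.update_of_ne hb]; exact hq b]

lemma prE_mem_and (q : Fin n → ℝ) (i : Fin n) (E : Finset (Fin n) → Prop) :
    prE q (fun T => i ∈ T ∧ E T) = q i * prE (Function.update q i 1) E := by
  rw [prE, prE, mul_sum]
  refine sum_congr rfl fun T _ => ?_
  by_cases hE : E T
  · simp only [hE, and_true, if_true, ite_mem_prodP]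
  · simp only [hE, and_false, if_false, mul_zero]

lemma prE_mem (q : Fin n → ℝ) (i : Fin n) : prE q (fun T => i ∈ T) = q i := by
  simpa [prE_true] using prE_mem_and q i (fun _ => True)

lemma prE_mem_and_mem (q : Fin n → ℝ) {a b : Fin n} (hab : a ≠ b) :
    prE q (fun T => a ∈ T ∧ b ∈ T) = q a * q b := by
  rw [prE_mem_and, prE_mem, Function.update_of_ne hab.symm]

lemma expectation_ite (q : Fin n → ℝ) (E : Finset (Fin n) → Prop) [DecidablePred E] (c : ℝ) :
    expectation q (fun T => if E T then c else 0) = c * prE q E := by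
  rw [expectation, prE, mul_sum]
  exact sum_congr rfl fun T _ => by split_ifs <;> simp_all [mul_comm]

lemma expectation_sum {ι : Type*} (q : Fin n → ℝ) (W : Finset ι) (f : ι → Finset (Fin n) → ℝ) :
    expectation q (fun T => ∑ a ∈ W, f a T) = ∑ a ∈ W, expectation q (f a) := by
  simp only [expectation, mul_sum]
  exact sum_comm

lemma mul_prE_le_expectation (hq : ∀ i, q i ∈ Set.Icc (0 : ℝ) 1) {E : Finset (Fin n) → Prop}
    {f : Finset (Fin n) → ℝ} {c : ℝ} (hf : ∀ T, 0 ≤ f T) (h : ∀ T, E T → c ≤ f T) :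
    c * prE q E ≤ expectation q f := by
  rw [← expectation_ite]
  refine sum_le_sum fun T _ => mul_le_mul_of_nonneg_left ?_ (prodP_nonneg hq T)
  show (if E T then c else 0) ≤ f T
  split_ifs with hE
  exacts [h T hE, hf T]

/-- Markov's inequality for the random weight `∑ a ∈ W ∩ T, w a`. -/
lemma mul_prE_le_sum_mul (hq : ∀ i, q i ∈ Set.Icc (0 : ℝ) 1) {E : Finset (Fin n) → Prop}
    {W : Finset (Fin n)} {w : Fin n → ℝ} {c : ℝ} (hw : ∀ a ∈ W, 0 ≤ w a)
    (h : ∀ T, E T → c ≤ ∑ a ∈ W ∩ T, w a) :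
    c * prE q E ≤ ∑ a ∈ W, w a * q a := by
  have hf : ∀ T, ∑ a ∈ W ∩ T, w a = ∑ a ∈ W, if a ∈ T then w a else 0 :=
    fun T => (sum_ite_mem W T w).symm
  calc c * prE q E ≤ expectation q (fun T => ∑ a ∈ W, if a ∈ T then w a else 0) :=
        mul_prE_le_expectation hq (fun T => hf T ▸ sum_nonneg fun a ha => hw a (mem_inter.1 ha).1)
          fun T hE => hf T ▸ h T hE
    _ = ∑ a ∈ W, w a * q a := by
        simp only [expectation_sum, expectation_ite, prE_mem]

lemma prE_exists_mem_le (hq : ∀ i, q i ∈ Set.Icc (0 : ℝ) 1) (W : Finset (Fin n)) :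
    prE q (fun T => ∃ a ∈ W, a ∈ T) ≤ ∑ a ∈ W, q a := by
  simpa using mul_prE_le_sum_mul hq (W := W) (w := 1) (c := 1) (fun _ _ => zero_le_one)
    fun T ⟨a, haW, haT⟩ => by simpa using ⟨a, mem_inter.2 ⟨haW, haT⟩⟩

lemma prE_exists_pair_le (hq : ∀ i, q i ∈ Set.Icc (0 : ℝ) 1) (M : Finset (Fin n)) :
    prE q (fun T => ∃ a ∈ M, ∃ b ∈ M, a ≠ b ∧ a ∈ T ∧ b ∈ T) ≤ (∑ a ∈ M, q a) ^ 2 / 2 := by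
  have hpairs : 2 * prE q (fun T => ∃ a ∈ M, ∃ b ∈ M, a ≠ b ∧ a ∈ T ∧ b ∈ T)
      ≤ expectation q (fun T => ∑ p ∈ M.offDiag, if p.1 ∈ T ∧ p.2 ∈ T then 1 else 0) := by
    refine mul_prE_le_expectation hq (fun T => sum_nonneg fun p _ => by split_ifs <;> norm_num) ?_
    rintro T ⟨a, ha, b, hb, hab, haT, hbT⟩
    rw [← natCast_card_filter]
    have hsub : {(a, b), (b, a)} ⊆ M.offDiag.filter (fun p => p.1 ∈ T ∧ p.2 ∈ T) := by
      simp [insert_subset_iff, ha, hb, hab, hab.symm, haT, hbT]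
    have := card_le_card hsub
    rw [card_pair (by simp [hab])] at this
    exact_mod_cast this
  have hoffDiag : ∑ p ∈ M.offDiag, q p.1 * q p.2 ≤ (∑ a ∈ M, q a) ^ 2 := by
    rw [sq, sum_mul_sum, ← sum_product']
    exact sum_le_sum_of_subset_of_nonneg (fun p hp => by simp_all [mem_offDiag])
      fun p _ _ => mul_nonneg (hq p.1).1 (hq p.2).1
  rw [expectation_sum] at hpairs
  simp only [expectation_ite, one_mul] at hpairs
  rw [sum_congr rfl fun p hp => prE_mem_and_mem q (mem_offDiag.1 hp).2.2] at hpairs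
  linarith

lemma prodP_inter_mul_prodP_union (q : Fin n → ℝ) (S T : Finset (Fin n)) :
    prodP q (S ∩ T) * prodP q (S ∪ T) = prodP q S * prodP q T := by
  simp only [prodP, compl_inter, compl_union]
  rw [mul_mul_mul_comm, mul_comm (∏ i ∈ S ∩ T, q i), prod_union_inter, prod_union_inter]
  ring

/-- Harris' inequality. -/
lemma prE_mul_prE_le_prE_and (hq : ∀ i, q i ∈ Set.Icc (0 : ℝ) 1)
    {A B : Finset (Fin n) → Prop} (hA : Antitone A) (hB : Antitone B) :
    prE q A * prE q B ≤ prE q (fun T => A T ∧ B T) := by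
  have hnn : ∀ (P : Prop) [Decidable P] (T : Finset (Fin n)), 0 ≤ if P then prodP q T else 0 :=
    fun P _ T => by split_ifs; exacts [prodP_nonneg hq T, le_rfl]
  have h := four_functions_theorem_univ (fun T => if A T then prodP q T else 0)
    (fun T => if B T then prodP q T else 0) (fun T => if A T ∧ B T then prodP q T else 0)
    (prodP q) (fun T => hnn _ T) (fun T => hnn _ T) (fun T => hnn _ T) (prodP_nonneg hq)
    fun S T => by
      rw [inf_eq_inter, sup_eq_union]
      by_cases hS : A S <;> by_cases hT : B T
      · rw [if_pos hS, if_pos hT, if_pos ⟨hA inter_subset_left hS, hB inter_subset_right hT⟩,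
          prodP_inter_mul_prodP_union]
      all_goals simp only [hS, hT, if_false, zero_mul, mul_zero]
      all_goals exact mul_nonneg (hnn _ _) (prodP_nonneg hq _)
  rw [sum_prodP, mul_one] at h
  exact h.trans_eq (sum_congr rfl fun T _ => by congr)

lemma prod_prE_le_prE_forall {ι : Type*} (hq : ∀ i, q i ∈ Set.Icc (0 : ℝ) 1)
    {A : ι → Finset (Fin n) → Prop} (hA : ∀ j, Antitone (A j)) (J : Finset ι) :
    ∏ j ∈ J, prE q (A j) ≤ prE q (fun T => ∀ j ∈ J, A j T) := by
  induction J using Finset.induction_on with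
  | empty => simp [prE_true]
  | insert j J hj ih =>
    simp only [prod_insert hj, forall_mem_insert]
    calc prE q (A j) * ∏ j ∈ J, prE q (A j)
        ≤ prE q (A j) * prE q (fun T => ∀ j ∈ J, A j T) :=
          mul_le_mul_of_nonneg_left ih (prE_nonneg hq _)
      _ ≤ _ := prE_mul_prE_le_prE_and hq (hA j) fun S T hST h j hj => hA j hST (h j hj)

end ProductMeasure

section Load

variable {n : ℕ} {w x q : Fin n → ℝ} {i : Fin n} {C : ℝ}

noncomputable def loadAtLeast (w : Fin n → ℝ) (i : Fin n) (T : Finset (Fin n)) : ℝ :=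
  ∑ b ∈ T.filter (fun b => w i ≤ w b), w b

noncomputable def rivals (w : Fin n → ℝ) (i : Fin n) : Finset (Fin n) :=
  univ.filter (fun b => b ≠ i ∧ w i ≤ w b)

noncomputable def bigOthers (w : Fin n → ℝ) (i : Fin n) : Finset (Fin n) :=
  univ.filter (fun b => b ≠ i ∧ 1/2 < w b)

lemma antitone_loadAtLeast_le_one (hw : ∀ b, 0 ≤ w b) (i : Fin n) :
    Antitone (fun T => loadAtLeast w i T ≤ 1) := fun _ _ hST h =>
  (sum_le_sum_of_subset_of_nonneg (filter_subset_filter _ hST) fun b _ _ => hw b).trans h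

lemma sub_lt_sum_rivals_inter (hwi : 0 ≤ w i) {T : Finset (Fin n)}
    (hT : 1 < loadAtLeast w i T) : 1 - w i < ∑ b ∈ rivals w i ∩ T, w b := by
  have hrivals : rivals w i ∩ T = (T.filter (fun b => w i ≤ w b)).erase i := by
    ext b
    simp only [rivals, mem_inter, mem_filter, mem_univ, true_and, mem_erase]
    tauto
  rw [hrivals]
  rw [loadAtLeast] at hT
  by_cases hi : i ∈ T.filter (fun b => w i ≤ w b)
  · linarith [add_sum_erase _ w hi]
  · rw [erase_eq_of_notMem hi]
    linarith

lemma sum_bigOthers_le (hx : ∀ b, 0 ≤ x b)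
    (hLPbig : ∑ b ∈ univ.filter (fun b => 1/2 < w b), x b ≤ 1) (hC : 0 ≤ C)
    (hqx : ∀ b ≠ i, q b ≤ C * x b) : ∑ b ∈ bigOthers w i, q b ≤ C := by
  calc ∑ b ∈ bigOthers w i, q b ≤ ∑ b ∈ bigOthers w i, C * x b :=
        sum_le_sum fun b hb => hqx b (mem_filter.1 hb).2.1
    _ = C * ∑ b ∈ bigOthers w i, x b := (mul_sum _ _ _).symm
    _ ≤ C * 1 := by
        refine mul_le_mul_of_nonneg_left (le_trans ?_ hLPbig) hC
        exact sum_le_sum_of_subset_of_nonneg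
          (fun b hb => mem_filter.2 ⟨mem_univ b, (mem_filter.1 hb).2.2⟩)
          fun b _ _ => hx b
    _ = C := mul_one C

lemma sum_rivals_mul_le (hw : ∀ b, 0 ≤ w b) (hx : ∀ b, 0 ≤ x b)
    (hLP : ∑ b, w b * x b ≤ 1) (hC : 0 ≤ C)
    (hqx : ∀ b ≠ i, q b ≤ C * x b) : ∑ b ∈ rivals w i, w b * q b ≤ C := by
  calc ∑ b ∈ rivals w i, w b * q b ≤ ∑ b ∈ rivals w i, C * (w b * x b) :=
        sum_le_sum fun b hb => by
          rw [mul_left_comm]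
          exact mul_le_mul_of_nonneg_left (hqx b (mem_filter.1 hb).2.1) (hw b)
    _ = C * ∑ b ∈ rivals w i, w b * x b := (mul_sum _ _ _).symm
    _ ≤ C * 1 := by
        refine mul_le_mul_of_nonneg_left (le_trans ?_ hLP) hC
        exact sum_le_sum_of_subset_of_nonneg (subset_univ _)
          fun b _ _ => mul_nonneg (hw b) (hx b)
    _ = C := mul_one C

lemma prE_one_lt_loadAtLeast_le_of_big (hq : ∀ b, q b ∈ Set.Icc (0 : ℝ) 1) (hwi : w i ≤ 1)
    (hbig : 1/2 < w i) (hC : ∑ b ∈ bigOthers w i, q b ≤ C) :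
    prE q (fun T => 1 < loadAtLeast w i T) ≤ C := by
  refine (prE_mono hq fun T hT => ?_).trans ((prE_exists_mem_le hq _).trans hC)
  have hpos := (sub_nonneg.2 hwi).trans_lt (sub_lt_sum_rivals_inter (by linarith) hT)
  obtain ⟨b, hb, -⟩ := exists_ne_zero_of_sum_ne_zero hpos.ne'
  obtain ⟨hbr, hbT⟩ := mem_inter.1 hb
  obtain ⟨hbi, hib⟩ := (mem_filter.1 hbr).2
  exact ⟨b, mem_filter.2 ⟨mem_univ b, hbi, hbig.trans_le hib⟩, hbT⟩

lemma prE_one_lt_loadAtLeast_le_of_medium (hq : ∀ b, q b ∈ Set.Icc (0 : ℝ) 1) (hw : ∀ b, 0 ≤ w b)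
    (hwi : 0 < w i) (hmed : w i ≤ 1/2) (hbig : ∑ b ∈ bigOthers w i, q b ≤ C)
    (hriv : ∑ b ∈ rivals w i, w b * q b ≤ C) :
    prE q (fun T => 1 < loadAtLeast w i T) ≤ C + (C / w i) ^ 2 / 2 := by
  set M := (rivals w i).filter (fun b => w b ≤ 1/2)
  -- A single medium rival fits next to `i`, so overflow needs a big item or two medium ones.
  have hsplit : ∀ T, 1 < loadAtLeast w i T →
      (∃ b ∈ bigOthers w i, b ∈ T) ∨ (∃ a ∈ M, ∃ b ∈ M, a ≠ b ∧ a ∈ T ∧ b ∈ T) := by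
    intro T hT
    by_contra! hfits
    obtain ⟨hnobig, hnopair⟩ := hfits
    have hmedium : ∀ b ∈ rivals w i ∩ T, b ∈ M := fun b hb => by
      obtain ⟨hbr, hbT⟩ := mem_inter.1 hb
      refine mem_filter.2 ⟨hbr, not_lt.1 fun hbb => hnobig b ?_ hbT⟩
      exact mem_filter.2 ⟨mem_univ b, (mem_filter.1 hbr).2.1, hbb⟩
    have hcard : #(rivals w i ∩ T) ≤ 1 := card_le_one.2 fun a ha b hb => by
      by_contra hab
      exact hnopair a (hmedium a ha) b (hmedium b hb) hab (mem_inter.1 ha).2 (mem_inter.1 hb).2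
    have hsum : ∑ b ∈ rivals w i ∩ T, w b ≤ 1/2 := by
      calc ∑ b ∈ rivals w i ∩ T, w b ≤ #(rivals w i ∩ T) • (1/2 : ℝ) :=
            sum_le_card_nsmul _ _ _ fun b hb => (mem_filter.1 (hmedium b hb)).2
        _ ≤ 1 • (1/2 : ℝ) := by gcongr
        _ = 1/2 := one_smul _ _
    linarith [sub_lt_sum_rivals_inter hwi.le hT]
  have hσ : (∑ b ∈ M, q b) * w i ≤ C :=
    calc (∑ b ∈ M, q b) * w i ≤ ∑ b ∈ M, w b * q b := by
          rw [sum_mul]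
          exact sum_le_sum fun b hb => by
            rw [mul_comm]
            exact mul_le_mul_of_nonneg_right (mem_filter.1 (mem_filter.1 hb).1).2.2 (hq b).1
      _ ≤ ∑ b ∈ rivals w i, w b * q b :=
          sum_le_sum_of_subset_of_nonneg (filter_subset _ _)
            fun b _ _ => mul_nonneg (hw b) (hq b).1
      _ ≤ C := hriv
  have hσC : (∑ b ∈ M, q b) ^ 2 ≤ (C / w i) ^ 2 :=
    pow_le_pow_left₀ (sum_nonneg fun b _ => (hq b).1) ((le_div_iff₀ hwi).2 hσ) 2
  calc prE q (fun T => 1 < loadAtLeast w i T)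
      ≤ prE q (fun T => ∃ b ∈ bigOthers w i, b ∈ T)
        + prE q (fun T => ∃ a ∈ M, ∃ b ∈ M, a ≠ b ∧ a ∈ T ∧ b ∈ T) := prE_le_add hq hsplit
    _ ≤ C + (C / w i) ^ 2 / 2 := by
        gcongr
        · exact (prE_exists_mem_le hq _).trans hbig
        · exact (prE_exists_pair_le hq M).trans (by gcongr)

lemma prE_one_lt_loadAtLeast_le_of_small (hq : ∀ b, q b ∈ Set.Icc (0 : ℝ) 1) (hw : ∀ b, 0 ≤ w b)
    (hwi : w i < 1) (hriv : ∑ b ∈ rivals w i, w b * q b ≤ C) :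
    prE q (fun T => 1 < loadAtLeast w i T) ≤ C / (1 - w i) := by
  rw [le_div_iff₀ (sub_pos.2 hwi), mul_comm]
  exact (mul_prE_le_sum_mul hq (fun b _ => hw b)
    fun T hT => (sub_lt_sum_rivals_inter (hw i) hT).le).trans hriv

end Load

section Threshold

variable {a t C : ℝ}

lemma add_sq_div_le_mul_one_add (ht : 0 ≤ t) (ht1 : t ≤ 1) (htC : t ^ 3 = 2 * C)
    (ha : t / (1 + t) < a) : C + (C / a) ^ 2 / 2 ≤ C * (1 + t) := by
  have ha0 : 0 < a := (div_nonneg ht (by linarith)).trans_lt ha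
  have hta : t < a * (1 + t) := (div_lt_iff₀ (by linarith)).1 ha
  have hsq : t ^ 2 ≤ (a * (1 + t)) ^ 2 := pow_le_pow_left₀ ht hta.le 2
  -- `4C = 2t³ ≤ 2a²t(1+t)² ≤ 8a²t`
  have h4C : 4 * C ≤ 2 * a ^ 2 * t * (1 + t) ^ 2 := by
    nlinarith [mul_le_mul_of_nonneg_left hsq ht]
  have h4 : 2 * a ^ 2 * t * (1 + t) ^ 2 ≤ 2 * a ^ 2 * t * 4 :=
    mul_le_mul_of_nonneg_left (by nlinarith) (by positivity)
  have hC : C ≤ 2 * a ^ 2 * t := by linarith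
  rw [div_pow, mul_one_add, add_le_add_iff_left, div_div, div_le_iff₀ (by positivity)]
  nlinarith [pow_nonneg ht 3]

lemma div_one_sub_le_mul_one_add (ht : 0 ≤ t) (hC : 0 ≤ C) (ha : a ≤ t / (1 + t)) :
    C / (1 - a) ≤ C * (1 + t) := by
  have hat : a * (1 + t) ≤ t := (le_div_iff₀ (by linarith)).1 ha
  have h1a : 0 < 1 - a := by nlinarith
  rw [div_le_iff₀ h1a]
  nlinarith

lemma one_sub_mul_one_add_rpow_mem_Icc (hC : 0 ≤ C) (hC2 : 2 * C ≤ 1) :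
    1 - C * (1 + (2 * C) ^ ((1 : ℝ) / 3)) ∈ Set.Icc (0 : ℝ) 1 := by
  have ht : 0 ≤ (2 * C) ^ ((1 : ℝ) / 3) := by positivity
  have ht1 : (2 * C) ^ ((1 : ℝ) / 3) ≤ 1 := Real.rpow_le_one (by positivity) hC2 (by norm_num)
  constructor <;> nlinarith

end Threshold

lemma one_sub_le_prE_loadAtLeast_le_one {n : ℕ} {w x q : Fin n → ℝ} {i : Fin n} {C : ℝ}
    (hw : ∀ b, w b ∈ Set.Icc (0 : ℝ) 1) (hx : ∀ b, 0 ≤ x b) (hLP : ∑ b, w b * x b ≤ 1)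
    (hLPbig : ∑ b ∈ univ.filter (fun b => 1/2 < w b), x b ≤ 1)
    (hq : ∀ b, q b ∈ Set.Icc (0 : ℝ) 1) (hC : 0 ≤ C) (hC2 : 2 * C ≤ 1)
    (hqx : ∀ b ≠ i, q b ≤ C * x b) :
    1 - C * (1 + (2 * C) ^ ((1 : ℝ) / 3)) ≤ prE q (fun T => loadAtLeast w i T ≤ 1) := by
  suffices prE q (fun T => 1 < loadAtLeast w i T) ≤ C * (1 + (2 * C) ^ ((1 : ℝ) / 3)) by
    simp only [← not_lt, prE_not]
    linarith
  set t := (2 * C) ^ ((1 : ℝ) / 3)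
  have ht : 0 ≤ t := by positivity
  have htC : t ^ 3 = 2 * C := by
    rw [← Real.rpow_natCast, ← Real.rpow_mul (by positivity)]
    norm_num
  have ht1 : t ≤ 1 := Real.rpow_le_one (by positivity) hC2 (by norm_num)
  have hw0 : ∀ b, 0 ≤ w b := fun b => (hw b).1
  have hbig := sum_bigOthers_le (w := w) hx hLPbig hC hqx
  have hriv := sum_rivals_mul_le hw0 hx hLP hC hqx
  rcases lt_or_ge (1/2) (w i) with hwi | hwi
  · exact (prE_one_lt_loadAtLeast_le_of_big hq (hw i).2 hwi hbig).trans
      (le_mul_of_one_le_right hC (by linarith))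
  rcases lt_or_ge (t / (1 + t)) (w i) with hwt | hwt
  · have hwi0 : 0 < w i := (div_nonneg ht (by linarith)).trans_lt hwt
    exact (prE_one_lt_loadAtLeast_le_of_medium hq hw0 hwi0 hwi hbig hriv).trans
      (add_sq_div_le_mul_one_add ht ht1 htC hwt)
  · have hwi1 : w i < 1 := hwt.trans_lt ((div_lt_one (by linarith)).2 (by linarith))
    exact (prE_one_lt_loadAtLeast_le_of_small hq hw0 hwi1 hriv).trans
      (div_one_sub_le_mul_one_add ht hC hwt)

theorem survival_bound_fkg_general (n m k : ℕ) (s : Fin n → Fin m → ℝ)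
    (hs : ∀ i j, s i j ∈ Set.Icc (0:ℝ) 1)
    (hsparse : ∀ i, ((univ : Finset (Fin m)).filter (fun j => 0 < s i j)).card ≤ k)
    (x : Fin n → ℝ) (hx : ∀ i, x i ∈ Set.Icc (0:ℝ) 1)
    (hLP : ∀ j, ∑ i, s i j * x i ≤ 1)
    (hLPbig : ∀ j, ∑ i ∈ univ.filter (fun i => 1/2 < s i j), x i ≤ 1)
    (α : ℝ) (hαk : 2 ≤ α * k)
    (q : Fin n → ℝ) (hq : ∀ i, q i = x i / (α * k))
    (i : Fin n) :
    prE q (fun T => i ∈ altSet' s T)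
      ≥ (1 - (1 / (α * k)) * (1 + (2 / (α * k)) ^ ((1:ℝ)/3)))^k
          * prE q (fun T => i ∈ T) := by
  set C := 1 / (α * k)
  have hC : 0 ≤ C := by positivity
  have hC2 : 2 * C ≤ 1 := by rw [mul_one_div, div_le_one (by linarith)]; exact hαk
  rw [← mul_one_div 2]
  set c := 1 - C * (1 + (2 * C) ^ ((1 : ℝ) / 3))
  have hqC : ∀ b, q b = C * x b := fun b => by rw [hq, div_eq_mul_one_div, mul_comm]
  have hq01 : ∀ b, q b ∈ Set.Icc (0 : ℝ) 1 := fun b => hqC b ▸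
    ⟨mul_nonneg hC (hx b).1, by linarith [mul_le_mul_of_nonneg_left (hx b).2 hC]⟩
  set q' := Function.update q i 1
  have hq'01 : ∀ b, q' b ∈ Set.Icc (0 : ℝ) 1 := update_mem_Icc hq01 ⟨zero_le_one, le_rfl⟩
  have hfits : ∀ j, c ≤ prE q' (fun T => loadAtLeast (fun b => s b j) i T ≤ 1) := fun j =>
    one_sub_le_prE_loadAtLeast_le_one (fun b => hs b j) (fun b => (hx b).1) (hLP j) (hLPbig j)
      hq'01 hC hC2 fun b hb => by simp only [q', Function.update_of_ne hb, hqC, le_refl]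
  obtain ⟨hc0, hc1⟩ : c ∈ Set.Icc (0 : ℝ) 1 := one_sub_mul_one_add_rpow_mem_Icc hC hC2
  set N := (univ : Finset (Fin m)).filter (fun j => 0 < s i j)
  have hqi := (hq01 i).1
  calc c ^ k * prE q (fun T => i ∈ T) = q i * c ^ k := by rw [prE_mem, mul_comm]
    _ ≤ q i * c ^ #N := mul_le_mul_of_nonneg_left (pow_le_pow_of_le_one hc0 hc1 (hsparse i)) hqi
    _ ≤ q i * ∏ j ∈ N, prE q' (fun T => loadAtLeast (fun b => s b j) i T ≤ 1) := by
        rw [← prod_const]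
        exact mul_le_mul_of_nonneg_left (prod_le_prod (fun _ _ => hc0) fun j _ => hfits j) hqi
    _ ≤ q i * prE q' (fun T => ∀ j ∈ N, loadAtLeast (fun b => s b j) i T ≤ 1) :=
        mul_le_mul_of_nonneg_left (prod_prE_le_prE_forall hq'01
          (fun j => antitone_loadAtLeast_le_one (fun b => (hs b j).1) i) N) hqi
    _ = prE q (fun T => i ∈ altSet' s T) := by
        rw [← prE_mem_and]
        congr
        ext T
        simp [altSet', loadAtLeast, N]

/-- for `x` feasible for the strengthened LP,
`Pr[i ∈ Alt'(S) | i ∈ S] ≥ (1 - (1/(αk))(1 + (2/(αk))^{1/3}))^k` (stated in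
multiplied-out form; note `i ∈ Alt'(S)` implies `i ∈ S`). -/
theorem survival_bound_fkg (n m k : ℕ) (s : Fin n → Fin m → ℝ)
    (hs : ∀ i j, s i j ∈ Set.Icc (0:ℝ) 1)
    (hsparse : ∀ i, ((univ : Finset (Fin m)).filter (fun j => 0 < s i j)).card ≤ k)
    (x : Fin n → ℝ) (hx : ∀ i, x i ∈ Set.Icc (0:ℝ) 1)
    (hLP : ∀ j, ∑ i, s i j * x i ≤ 1)
    (hLPbig : ∀ j, ∑ i ∈ univ.filter (fun i => 1/2 < s i j), x i ≤ 1)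
    (α : ℝ) (hα : 0 < α) (hαk : 2 ≤ α * k)
    (q : Fin n → ℝ) (hq : ∀ i, q i = x i / (α * k))
    (i : Fin n) :
    prE q (fun T => i ∈ altSet' s T)
      ≥ (1 - (1 / (α * k)) * (1 + (2 / (α * k)) ^ ((1:ℝ)/3)))^k
          * prE q (fun T => i ∈ T) :=
  survival_bound_fkg_general n m k s hs hsparse x hx hLP hLPbig α hαk q hq i
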